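/- Let A be a Metzler matrix in ℝ^{n×n} (all off-diagonal entries nonnegative). Then the following three statements are equivalent: (i) A is Hurwitz, i.e. every complex eigenvalue of A has negative real part; (ii) there exists a vector p ∈ ℝⁿ with all components strictly positive such that Ap has all components strictly negative; (iii) A is invertible and −A⁻¹ has all entries nonnegative. -/

import Mathlib

/-!
(ii) ⇒ (i): the Gershgorin discs of `diag(p)⁻¹ A diag(p)` lie in the open left half-plane,
because the off-diagonal entries of `A` are nonnegative and `A p ≪ 0`.

(iii) ⇒ (ii): take `p = -A⁻¹ 1`; it is positive because a nonnegative invertible matrix has no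
zero row.

(i) ⇒ (iii): for large `s` the matrix `x = 1 + s⁻¹ A` is nonnegative and its spectrum
`1 + s⁻¹ σ(A)` lies in the open unit disc, so `xⁿ → 0` by Gelfand's formula and
`-s A⁻¹ = (1 - x)⁻¹ = ∑ xⁿ` is nonnegative.
-/

open Matrix Filter Finset Topology
open scoped ENNReal

theorem tendsto_pow_atTop_nhds_zero_of_spectralRadius_lt_one {A : Type*} [NormedRing A]
    [NormedAlgebra ℂ A] [CompleteSpace A] {a : A} (ha : spectralRadius ℂ a < 1) :
    Tendsto (fun n => a ^ n) atTop (𝓝 0) := by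
  obtain ⟨r, hρr, hr1⟩ := ENNReal.lt_iff_exists_nnreal_btwn.1 ha
  have hroot : ∀ᶠ n : ℕ in atTop, (‖a ^ n‖₊ : ℝ≥0∞) ^ (1 / n : ℝ) < r :=
    (spectrum.pow_nnnorm_pow_one_div_tendsto_nhds_spectralRadius a).eventually_lt_const hρr
  refine squeeze_zero_norm' ?_ (tendsto_pow_atTop_nhds_zero_of_lt_one r.2 (mod_cast hr1))
  filter_upwards [hroot, eventually_gt_atTop 0] with n hn hn0
  rw [one_div, ENNReal.rpow_inv_lt_iff (by positivity), ENNReal.rpow_natCast] at hn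
  exact_mod_cast hn.le

theorem Complex.eventually_norm_ofReal_add_lt {μ : ℂ} (hμ : μ.re < 0) :
    ∀ᶠ s : ℝ in atTop, ‖(s : ℂ) + μ‖ < s := by
  filter_upwards [eventually_gt_atTop 0, eventually_gt_atTop (‖μ‖ ^ 2 / (-2 * μ.re))]
    with s hs hμs
  have hsq : ‖(s : ℂ) + μ‖ ^ 2 = s ^ 2 + 2 * s * μ.re + ‖μ‖ ^ 2 := by
    simp only [Complex.sq_norm, Complex.normSq_apply, Complex.add_re, Complex.add_im,
      Complex.ofReal_re, Complex.ofReal_im]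
    ring
  rw [div_lt_iff₀ (by linarith)] at hμs
  exact lt_of_pow_lt_pow_left₀ 2 hs.le (by nlinarith)

namespace Matrix

variable {ι : Type*} [DecidableEq ι]

def IsMetzler (A : Matrix ι ι ℝ) : Prop := ∀ i j, i ≠ j → 0 ≤ A i j

theorem IsMetzler.one_add_inv_smul_apply_nonneg {A : Matrix ι ι ℝ} (hA : A.IsMetzler) {s : ℝ}
    (hs : 0 < s) (hdiag : ∀ i, -A i i ≤ s) (i j : ι) : 0 ≤ (1 + s⁻¹ • A) i j := by
  rcases eq_or_ne i j with rfl | hij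
  · have : 1 + s⁻¹ * A i i = s⁻¹ * (s + A i i) := by field_simp
    simpa [this] using mul_nonneg (inv_nonneg.2 hs.le) (by linarith [hdiag i])
  · simpa [one_apply_ne hij] using mul_nonneg (inv_nonneg.2 hs.le) (hA i j hij)

variable [Fintype ι]

theorem exists_norm_sub_diag_mul_le_of_mem_spectrum {𝕜 : Type*} [RCLike 𝕜] {M : Matrix ι ι 𝕜}
    {p : ι → ℝ} (hp : ∀ i, 0 < p i) {μ : 𝕜} (hμ : μ ∈ spectrum 𝕜 M) :
    ∃ k, ‖μ - M k k‖ * p k ≤ ∑ j ∈ univ.erase k, ‖M k j‖ * p j := by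
  have hp' : ∀ i, (p i : 𝕜) ≠ 0 := fun i => RCLike.ofReal_ne_zero.2 (hp i).ne'
  let D : (Matrix ι ι 𝕜)ˣ :=
    ⟨diagonal fun i => (p i : 𝕜), diagonal fun i => (p i : 𝕜)⁻¹,
      by simp [diagonal_mul_diagonal, hp'], by simp [diagonal_mul_diagonal, hp']⟩
  have hμ' : Module.End.HasEigenvalue
      (toLin' (diagonal (fun i => (p i : 𝕜)⁻¹) * M * diagonal fun i => (p i : 𝕜))) μ := by
    rw [Module.End.hasEigenvalue_iff_mem_spectrum, spectrum_toLin']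
    exact (spectrum.units_conjugate' (R := 𝕜) (a := M) (u := D)).symm ▸ hμ
  obtain ⟨k, hk⟩ := eigenvalue_mem_ball hμ'
  refine ⟨k, ?_⟩
  have hdiag : (p k : 𝕜)⁻¹ * M k k * p k = M k k := by
    rw [mul_comm _ (p k : 𝕜), ← mul_assoc, mul_inv_cancel₀ (hp' k), one_mul]
  have hoff : ∀ j, ‖(p k : 𝕜)⁻¹ * M k j * p j‖ = (p k)⁻¹ * (‖M k j‖ * p j) := fun j => by
    simp [norm_mul, abs_of_pos (hp _), mul_assoc]
  simp only [Metric.mem_closedBall, dist_eq_norm, diagonal_mul, mul_diagonal, hdiag, hoff,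
    ← mul_sum] at hk
  rw [mul_comm]
  exact (le_inv_mul_iff₀ (hp k)).1 hk

theorem exists_mem_spectrum_map_of_mem_spectrum_one_add_smul {A : Matrix ι ι ℝ} {c : ℝ}
    (hc : c ≠ 0) {z : ℂ} (hz : z ∈ spectrum ℂ ((1 + c • A).map (algebraMap ℝ ℂ))) :
    ∃ μ ∈ spectrum ℂ (A.map (algebraMap ℝ ℂ)), z = 1 + c * μ := by
  have hmap : (1 + c • A).map (algebraMap ℝ ℂ) =
      algebraMap ℂ _ 1 + Units.mk0 (c : ℂ) (mod_cast hc) • A.map (algebraMap ℝ ℂ) := by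
    ext i j
    by_cases h : i = j <;> simp [h]
  rw [hmap, ← spectrum.singleton_add_eq, spectrum.unit_smul_eq_smul] at hz
  obtain ⟨_, rfl, _, ⟨μ, hμ, rfl⟩, rfl⟩ := hz
  exact ⟨μ, hμ, rfl⟩

attribute [local instance] Matrix.linftyOpNormedRing Matrix.linftyOpNormedAlgebra in
theorem tendsto_pow_of_forall_mem_spectrum_map_norm_lt_one {x : Matrix ι ι ℝ}
    (hx : ∀ z ∈ spectrum ℂ (x.map (algebraMap ℝ ℂ)), ‖z‖ < 1) :
    Tendsto (fun n => x ^ n) atTop (𝓝 0) := by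
  cases isEmpty_or_nonempty ι
  · exact tendsto_const_nhds.congr fun n => Subsingleton.elim _ _
  have hρ : spectralRadius ℂ (x.map (algebraMap ℝ ℂ)) < 1 := by
    simpa using spectrum.spectralRadius_lt_of_forall_lt _ (r := 1) fun z hz => by
      exact_mod_cast hx z hz
  have hre : ∀ n, ((x.map (algebraMap ℝ ℂ)) ^ n).map Complex.re = x ^ n := fun n => by
    rw [← RingHom.mapMatrix_apply, ← map_pow, RingHom.mapMatrix_apply, map_map]
    exact map_id' _
  have := (continuous_id.matrix_map Complex.continuous_re).tendsto 0 |>.comp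
    (tendsto_pow_atTop_nhds_zero_of_spectralRadius_lt_one hρ)
  simpa only [Function.comp_def, id, hre, Matrix.map_zero _ Complex.zero_re] using this

theorem tendsto_sum_range_pow_nonsing_inv {R : Type*} [CommRing R] [TopologicalSpace R]
    [IsTopologicalRing R] {x : Matrix ι ι R} (hU : IsUnit (1 - x))
    (hx : Tendsto (fun n => x ^ n) atTop (𝓝 0)) :
    Tendsto (fun n => ∑ m ∈ range n, x ^ m) atTop (𝓝 (1 - x)⁻¹) := by
  have h : ∀ n, ∑ m ∈ range n, x ^ m = (1 - x ^ n) * (1 - x)⁻¹ := fun n => by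
    rw [← geom_sum_mul_neg, mul_assoc, mul_nonsing_inv _ ((isUnit_iff_isUnit_det _).1 hU),
      mul_one]
  simp_rw [h]
  simpa using ((tendsto_const_nhds (x := (1 : Matrix ι ι R))).sub hx).mul_const (1 - x)⁻¹

theorem nonsing_inv_one_sub_apply_nonneg {x : Matrix ι ι ℝ} (hx₀ : ∀ i j, 0 ≤ x i j)
    (hU : IsUnit (1 - x)) (hx : Tendsto (fun n => x ^ n) atTop (𝓝 0)) (i j : ι) :
    0 ≤ (1 - x)⁻¹ i j := by
  refine ge_of_tendsto ((continuous_id.matrix_elem i j).tendsto _ |>.comp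
    (tendsto_sum_range_pow_nonsing_inv hU hx)) (Eventually.of_forall fun n => ?_)
  show 0 ≤ (∑ m ∈ range n, x ^ m) i j
  rw [sum_apply]
  exact sum_nonneg fun m _ => pow_apply_nonneg hx₀ m i j

theorem mulVec_one_apply_pos_of_isUnit {R : Type*} [CommRing R] [PartialOrder R]
    [IsOrderedRing R] [Nontrivial R] {B : Matrix ι ι R} (hB : IsUnit B)
    (h₀ : ∀ i j, 0 ≤ B i j) (i : ι) : 0 < (B *ᵥ 1) i := by
  have hsum : (B *ᵥ 1) i = ∑ j, B i j := by simp [mulVec, dotProduct]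
  rw [hsum]
  refine (sum_nonneg fun j _ => h₀ i j).lt_of_ne' fun hzero => ?_
  have hrow : ∀ j, B i j = 0 := fun j =>
    (sum_eq_zero_iff_of_nonneg fun j _ => h₀ i j).1 hzero j (mem_univ j)
  exact ((isUnit_iff_isUnit_det B).1 hB).ne_zero (det_eq_zero_of_row_eq_zero i hrow)

theorem exists_pos_mulVec_neg_of_neg_inv_nonneg {A : Matrix ι ι ℝ} (hA : IsUnit A)
    (h₀ : ∀ i j, 0 ≤ (-A⁻¹) i j) : ∃ p : ι → ℝ, (∀ i, 0 < p i) ∧ ∀ i, (A *ᵥ p) i < 0 := by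
  refine ⟨-A⁻¹ *ᵥ 1, mulVec_one_apply_pos_of_isUnit (isUnit_nonsing_inv_iff.2 hA).neg h₀,
    fun i => ?_⟩
  rw [mulVec_mulVec, mul_neg, mul_nonsing_inv _ ((isUnit_iff_isUnit_det A).1 hA)]
  rw [neg_mulVec, one_mulVec]
  exact neg_lt_zero.2 one_pos

def IsHurwitz (A : Matrix ι ι ℝ) : Prop :=
  ∀ μ ∈ spectrum ℂ (A.map (algebraMap ℝ ℂ)), μ.re < 0

theorem IsHurwitz.isUnit {A : Matrix ι ι ℝ} (hA : A.IsHurwitz) : IsUnit A := by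
  have hM : IsUnit (A.map (algebraMap ℝ ℂ)) :=
    spectrum.isUnit_of_zero_notMem ℂ fun h0 => (hA 0 h0).false
  rw [isUnit_iff_isUnit_det, isUnit_iff_ne_zero] at hM ⊢
  intro h0
  apply hM
  rw [← RingHom.mapMatrix_apply, ← RingHom.map_det, h0, map_zero]

theorem IsMetzler.isHurwitz_of_mulVec_neg {A : Matrix ι ι ℝ} (hA : A.IsMetzler) {p : ι → ℝ}
    (hp : ∀ i, 0 < p i) (hAp : ∀ i, (A *ᵥ p) i < 0) : A.IsHurwitz := by
  intro μ hμ
  obtain ⟨k, hk⟩ := exists_norm_sub_diag_mul_le_of_mem_spectrum hp hμ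
  have hrow : ∑ j ∈ univ.erase k, ‖A.map (algebraMap ℝ ℂ) k j‖ * p j
      = (A *ᵥ p) k - A k k * p k := by
    rw [mulVec, dotProduct, ← add_sum_erase _ _ (mem_univ k), add_sub_cancel_left]
    refine sum_congr rfl fun j hj => ?_
    rw [map_apply, Complex.coe_algebraMap, Complex.norm_real, Real.norm_of_nonneg
      (hA k j (ne_of_mem_erase hj).symm)]
  have hre : μ.re - A k k ≤ ‖μ - A.map (algebraMap ℝ ℂ) k k‖ := by
    simpa using Complex.re_le_norm (μ - A k k)
  have hkey : μ.re * p k ≤ (A *ᵥ p) k :=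
    calc μ.re * p k = (μ.re - A k k) * p k + A k k * p k := by ring
      _ ≤ ‖μ - A.map (algebraMap ℝ ℂ) k k‖ * p k + A k k * p k := by
        gcongr
        exact (hp k).le
      _ ≤ (A *ᵥ p) k := by linarith
  exact neg_of_mul_neg_left (hkey.trans_lt (hAp k)) (hp k).le

theorem IsMetzler.neg_inv_apply_nonneg_of_isHurwitz {A : Matrix ι ι ℝ} (hA : A.IsMetzler)
    (hH : A.IsHurwitz) (i j : ι) : 0 ≤ (-A⁻¹) i j := by
  obtain ⟨s, hs, hdiag, hspec⟩ : ∃ s : ℝ, 0 < s ∧ (∀ i, -A i i ≤ s) ∧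
      ∀ μ ∈ spectrum ℂ (A.map (algebraMap ℝ ℂ)), ‖(s : ℂ) + μ‖ < s :=
    ((eventually_gt_atTop 0).and <| (eventually_all.2 fun i => eventually_ge_atTop _).and <|
      (finite_spectrum _).eventually_all.2 fun μ hμ =>
        Complex.eventually_norm_ofReal_add_lt (hH μ hμ)).exists
  set x := 1 + s⁻¹ • A
  have hxσ : ∀ z ∈ spectrum ℂ (x.map (algebraMap ℝ ℂ)), ‖z‖ < 1 := fun z hz => by
    obtain ⟨μ, hμ, rfl⟩ := exists_mem_spectrum_map_of_mem_spectrum_one_add_smul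
      (inv_ne_zero hs.ne') hz
    have : (1 : ℂ) + (s⁻¹ : ℝ) * μ = (s⁻¹ : ℝ) * ((s : ℂ) + μ) := by
      have : (s : ℂ) ≠ 0 := mod_cast hs.ne'
      push_cast
      field_simp
    rw [this, norm_mul, Complex.norm_real, Real.norm_of_nonneg (inv_nonneg.2 hs.le),
      inv_mul_lt_one₀ hs]
    exact hspec μ hμ
  have hinv : (1 - x) * -(s • A⁻¹) = 1 := by
    rw [sub_add_cancel_left, neg_mul_neg, smul_mul_smul_comm, inv_mul_cancel₀ hs.ne',
      one_smul, mul_nonsing_inv _ ((isUnit_iff_isUnit_det A).1 hH.isUnit)]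
  have hnonneg := nonsing_inv_one_sub_apply_nonneg (hA.one_add_inv_smul_apply_nonneg hs hdiag)
    ((isUnit_iff_isUnit_det _).2 (isUnit_det_of_right_inverse hinv))
    (tendsto_pow_of_forall_mem_spectrum_map_norm_lt_one hxσ) i j
  rw [inv_eq_right_inv hinv] at hnonneg
  simp only [neg_apply, smul_apply, smul_eq_mul] at hnonneg ⊢
  nlinarith

end Matrix

theorem metzler_hurwitz_tfae {n : ℕ} (A : Matrix (Fin n) (Fin n) ℝ)
    (hMetzler : ∀ i j, i ≠ j → 0 ≤ A i j) :
    List.TFAE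
      [∀ μ : ℂ, μ ∈ spectrum ℂ (A.map (algebraMap ℝ ℂ)) → μ.re < 0,
       ∃ p : Fin n → ℝ, (∀ i, 0 < p i) ∧ ∀ i, A.mulVec p i < 0,
       IsUnit A ∧ ∀ i j, 0 ≤ (-A⁻¹) i j] := by
  tfae_have 1 → 3 := fun hH =>
    ⟨IsHurwitz.isUnit hH, IsMetzler.neg_inv_apply_nonneg_of_isHurwitz hMetzler hH⟩
  tfae_have 3 → 2 := fun ⟨hU, h₀⟩ => exists_pos_mulVec_neg_of_neg_inv_nonneg hU h₀
  tfae_have 2 → 1 := fun ⟨_, hp, hAp⟩ => IsMetzler.isHurwitz_of_mulVec_neg hMetzler hp hAp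
  tfae_finish
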